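/- arXiv:0802.0185 — 3 statements merged into one kernel-verified Lean document; each statement's English description precedes it below -/
import Mathlib

section
/- Let F be a free group with finite symmetric free generating set S, and let G = (V,E) be a finite directed multigraph with edges labeled by S, defining the graph subshift X ⊆ V^F (x ∈ X iff for all f ∈ F and s ∈ S there is an edge from x(f) to x(fs) labeled s). If there exists a nontrivial weight W on G with W(v₁) > 0 for some vertex v₁, then there exists a periodic element x ∈ X (i.e., the stabilizer {f ∈ F : σ_f x = x} has finite index in F) with x(id) = v₁. -/
/-- The group element of the free group corresponding to a label: a free generator
or the inverse of one.  `ι × Bool` models the symmetric free generating set `S`. -/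
def genElem {ι : Type} (l : ι × Bool) : FreeGroup ι :=
  if l.2 then FreeGroup.of l.1 else (FreeGroup.of l.1)⁻¹

/-- The formal inverse of a label in the symmetric generating set. -/
def labInv {ι : Type} (l : ι × Bool) : ι × Bool := (l.1, !l.2)

/-- Membership in the graph subshift `X ⊆ V^F` determined by the labeled graph `E`:
for every `f` and every generator label `l` there is an edge from `x f` to `x (f * s)`
labeled `l`. -/
def InSubshift {ι V : Type} (E : V → V → ι × Bool → Prop) (x : FreeGroup ι → V) : Prop :=
  ∀ (f : FreeGroup ι) (l : ι × Bool), E (x f) (x (f * genElem l)) l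

/-!
The conditions on a weight are linear equations with rational coefficients. Composing `W` with a
`ℚ`-linear map `ℝ → ℚ` that stays positive on the finitely many positive values of `W` therefore
gives a rational weight with the same support, and clearing denominators an integral one, `N`.
On `K = Σ v, Fin (N v)` the edge weights `N (·, ·, s)` of a generator `s` form a matrix whose row
and column sums are `N v`, so they are realised by a permutation of `K` sending the fibre over `v`
to fibres over `s`-neighbours of `v`. These permutations make the free group act on the finite set
`K`; labelling the orbit of a point over `v₁` by fibres gives a point of the subshift that is
fixed by the kernel of the action.
-/

/-- Write each `y a` in a `ℚ`-basis of the span of the `y a` and replace the basis vectors by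
nearby rationals. -/
theorem exists_ratLinearMap_pos {α : Type*} [Finite α] (y : α → ℝ) :
    ∃ L : ℝ →ₗ[ℚ] ℚ, ∀ a, 0 < y a → 0 < L (y a) := by
  let W := Submodule.span ℚ (Set.range y)
  have : FiniteDimensional ℚ W := FiniteDimensional.span_of_finite ℚ (Set.finite_range y)
  let b := Module.finBasis ℚ W
  let yW : α → W := fun a => ⟨y a, Submodule.subset_span ⟨a, rfl⟩⟩
  let g : α → (Fin (Module.finrank ℚ W) → ℝ) → ℝ := fun a r => ∑ j, (b.repr (yW a) j : ℝ) * r j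
  have hy : ∀ a, g a (fun j => b j) = y a := fun a => by
    have := congrArg Subtype.val (b.sum_repr (yW a))
    simpa only [Submodule.coe_sum, Submodule.coe_smul, Rat.smul_def] using this
  have hU : IsOpen {r | ∀ a, 0 < y a → 0 < g a r} := by
    simp only [Set.ofPred_forall]
    exact isOpen_iInter_of_finite fun a => isOpen_iInter_of_finite fun _ =>
      isOpen_lt continuous_const (by fun_prop)
  obtain ⟨r, hr⟩ := (DenseRange.piMap fun _ => Rat.denseRange_cast).exists_mem_open hU
    ⟨fun j => b j, fun a ha => (hy a).symm ▸ ha⟩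
  obtain ⟨L, hL⟩ := LinearMap.exists_extend (b.constr ℚ r)
  refine ⟨L, fun a ha => ?_⟩
  have hLa : L (y a) = ∑ j, b.repr (yW a) j * r j := by
    rw [show y a = W.subtype (yW a) from rfl, ← LinearMap.comp_apply, hL,
      Module.Basis.constr_apply_fintype]
    rfl
  have hpos : (0 : ℝ) < ∑ j, (b.repr (yW a) j : ℝ) * r j := hr a ha
  rw [hLa]
  exact_mod_cast hpos

theorem Rat.exists_nat_eq_mul_of_nonneg {α : Type*} [Fintype α] (q : α → ℚ) (hq : ∀ a, 0 ≤ q a) :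
    ∃ D : ℕ, 0 < D ∧ ∀ a, ∃ n : ℕ, (n : ℚ) = D * q a := by
  refine ⟨∏ b, (q b).den, Finset.prod_pos fun b _ => (q b).pos, fun a => ?_⟩
  obtain ⟨k, hk⟩ : (q a).den ∣ ∏ b, (q b).den := Finset.dvd_prod_of_mem _ (Finset.mem_univ a)
  have hnum : ((q a).num.toNat : ℚ) = q a * (q a).den := by
    rw [Rat.mul_den_eq_num]; exact_mod_cast Int.toNat_of_nonneg (Rat.num_nonneg.2 (hq a))
  refine ⟨(q a).num.toNat * k, ?_⟩
  rw [hk]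
  push_cast
  rw [hnum]
  ring

theorem exists_perm_sigma_of_sum_eq {V : Type*} [Fintype V] (N : V → V → ℕ)
    (M : V → ℕ) (hrow : ∀ v, ∑ w, N v w = M v) (hcol : ∀ w, ∑ v, N v w = M w) :
    ∃ U : Equiv.Perm (Σ v, Fin (M v)), ∀ k, N k.1 (U k).1 ≠ 0 := by
  -- Cut the fibre over `v` into blocks of sizes `N v w` indexed by targets `w`, the fibre over
  -- `w` into blocks of sizes `N v w` indexed by sources `v`, and match equal blocks.
  let eRow : (Σ v, Fin (M v)) ≃ Σ v, Σ w, Fin (N v w) := Equiv.sigmaCongrRight fun v =>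
    Fintype.equivFinOfCardEq (by simp [hrow v]) |>.symm
  let eCol : (Σ w, Fin (M w)) ≃ Σ w, Σ v, Fin (N v w) := Equiv.sigmaCongrRight fun w =>
    Fintype.equivFinOfCardEq (by simp [hcol w]) |>.symm
  let swap : (Σ v, Σ w, Fin (N v w)) ≃ Σ w, Σ v, Fin (N v w) :=
    ⟨fun t => ⟨t.2.1, t.1, t.2.2⟩, fun t => ⟨t.2.1, t.1, t.2.2⟩, fun _ => rfl, fun _ => rfl⟩
  refine ⟨eRow.trans (swap.trans eCol.symm), fun k => ?_⟩
  show N k.1 (eRow k).2.1 ≠ 0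
  exact (Fin.pos (eRow k).2.2).ne'

theorem exists_periodic_inSubshift_of_perm {ι V K : Type} [Finite K] (E : V → V → ι × Bool → Prop)
    (label : K → V) (U : ι → Equiv.Perm K)
    (hfwd : ∀ i k, E (label k) (label (U i k)) (i, true))
    (hbwd : ∀ i k, E (label (U i k)) (label k) (i, false)) (k₀ : K) :
    ∃ x : FreeGroup ι → V, InSubshift E x ∧
      (∃ H : Subgroup (FreeGroup ι), H.FiniteIndex ∧
        ∀ f ∈ H, ∀ h : FreeGroup ι, x (f⁻¹ * h) = x h) ∧
      x 1 = label k₀ := by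
  let ρ : FreeGroup ι →* Equiv.Perm K := FreeGroup.lift fun i => (U i)⁻¹
  refine ⟨fun f => label ((ρ f)⁻¹ k₀), fun f ⟨i, b⟩ => ?_,
    ⟨ρ.ker, inferInstance, fun f hf h => ?_⟩, ?_⟩
  · simp only [map_mul, mul_inv_rev, Equiv.Perm.coe_mul, Function.comp_apply]
    cases b
    · simpa [ρ, genElem] using hbwd i ((U i)⁻¹ ((ρ f)⁻¹ k₀))
    · simpa [ρ, genElem] using hfwd i ((ρ f)⁻¹ k₀)
  · simp [(MonoidHom.mem_ker).1 hf]
  · simp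

structure IsWeight {ι V : Type} {R : Type*} [Fintype V] [AddCommMonoid R]
    (E : V → V → ι × Bool → Prop) (Wv : V → R) (We : V → V → ι × Bool → R) : Prop where
  eq_zero_of_not_edge : ∀ v w l, ¬ E v w l → We v w l = 0
  eq_sum_out : ∀ v l, Wv v = ∑ w, We v w l
  symm : ∀ v w l, We v w l = We w v (labInv l)

namespace IsWeight

variable {ι V : Type} {R S : Type*} [Fintype V] [AddCommMonoid R] [AddCommMonoid S]
  {E : V → V → ι × Bool → Prop} {Wv : V → R} {We : V → V → ι × Bool → R}

theorem eq_sum_in (hW : IsWeight E Wv We) (v : V) (l : ι × Bool) :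
    Wv v = ∑ w, We w v l := by
  simp only [hW.symm _ v l, hW.eq_sum_out v (labInv l)]

theorem map (hW : IsWeight E Wv We) (L : R →+ S) :
    IsWeight E (fun v => L (Wv v)) (fun v w l => L (We v w l)) where
  eq_zero_of_not_edge v w l h := by rw [hW.eq_zero_of_not_edge v w l h, map_zero]
  eq_sum_out v l := by rw [hW.eq_sum_out v l, map_sum]
  symm v w l := by rw [hW.symm]

theorem of_map {L : R →+ S} (hL : Function.Injective L)
    (hW : IsWeight E (fun v => L (Wv v)) (fun v w l => L (We v w l))) : IsWeight E Wv We where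
  eq_zero_of_not_edge v w l h := hL <| by rw [hW.eq_zero_of_not_edge v w l h, map_zero]
  eq_sum_out v l := hL <| by rw [hW.eq_sum_out v l, map_sum]
  symm v w l := hL (hW.symm v w l)

theorem exists_nat [Fintype ι] {Wv : V → ℝ} {We : V → V → ι × Bool → ℝ} (hW : IsWeight E Wv We)
    (hWv : ∀ v, 0 ≤ Wv v) (hWe : ∀ v w l, 0 ≤ We v w l) :
    ∃ (Nv : V → ℕ) (Ne : V → V → ι × Bool → ℕ), IsWeight E Nv Ne ∧ ∀ v, 0 < Wv v → 0 < Nv v := by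
  let y : V ⊕ V × V × (ι × Bool) → ℝ := Sum.elim Wv fun t => We t.1 t.2.1 t.2.2
  obtain ⟨L, hL⟩ := exists_ratLinearMap_pos y
  have hLy : ∀ a, 0 ≤ L (y a) := fun a => by
    have hy : 0 ≤ y a := by cases a <;> simp [y, hWv, hWe]
    rcases hy.eq_or_lt with h | h
    · rw [← h, map_zero]
    · exact (hL a h).le
  obtain ⟨D, hD, hn⟩ := Rat.exists_nat_eq_mul_of_nonneg _ hLy
  choose n hn using hn
  refine ⟨fun v => n (.inl v), fun v w l => n (.inr (v, w, l)), ?_, fun v hv => ?_⟩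
  · refine of_map (L := Nat.castAddMonoidHom ℚ) Nat.cast_injective ?_
    convert hW.map ((AddMonoidHom.mulLeft (D : ℚ)).comp L.toAddMonoidHom) using 1 <;>
      simp [hn, y]
  · have : (0 : ℚ) < n (.inl v) := by rw [hn]; exact mul_pos (by exact_mod_cast hD) (hL _ hv)
    exact_mod_cast this

theorem exists_periodic {Nv : V → ℕ} {Ne : V → V → ι × Bool → ℕ} (hN : IsWeight E Nv Ne)
    {v₁ : V} (hv₁ : 0 < Nv v₁) :
    ∃ x : FreeGroup ι → V, InSubshift E x ∧
      (∃ H : Subgroup (FreeGroup ι), H.FiniteIndex ∧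
        ∀ f ∈ H, ∀ h : FreeGroup ι, x (f⁻¹ * h) = x h) ∧
      x 1 = v₁ := by
  choose U hU using fun i => exists_perm_sigma_of_sum_eq (fun v w => Ne v w (i, true)) Nv
    (fun v => (hN.eq_sum_out v _).symm) (fun w => (hN.eq_sum_in w _).symm)
  have hE : ∀ v w l, Ne v w l ≠ 0 → E v w l := fun v w l =>
    not_imp_comm.1 (hN.eq_zero_of_not_edge v w l)
  exact exists_periodic_inSubshift_of_perm E Sigma.fst U (fun i k => hE _ _ _ (hU i k))
    (fun i k => hE _ _ _ (by rw [hN.symm]; exact hU i k)) ⟨v₁, ⟨0, hv₁⟩⟩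

end IsWeight

theorem periodic_treequence_of_weight_general
    {ι V : Type} [Fintype ι] [Fintype V]
    (E : V → V → ι × Bool → Prop)
    (Wv : V → ℝ) (We : V → V → (ι × Bool) → ℝ)
    (hWv : ∀ v, 0 ≤ Wv v) (hWe : ∀ v w l, 0 ≤ We v w l)
    (hsupp : ∀ v w l, ¬ E v w l → We v w l = 0)
    (h1 : ∀ v l, Wv v = ∑ w, We v w l)
    (h3 : ∀ v w l, We v w l = We w v (labInv l))
    (v₁ : V) (hpos : 0 < Wv v₁) :
    ∃ x : FreeGroup ι → V, InSubshift E x ∧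
      (∃ H : Subgroup (FreeGroup ι), H.FiniteIndex ∧
        ∀ f ∈ H, ∀ h : FreeGroup ι, x (f⁻¹ * h) = x h) ∧
      x 1 = v₁ := by
  obtain ⟨Nv, Ne, hN, hNpos⟩ := IsWeight.exists_nat ⟨hsupp, h1, h3⟩ hWv hWe
  exact hN.exists_periodic (hNpos v₁ hpos)

/-- a nontrivial weight with `W(v₁) > 0` on a finite constraint graph
yields a periodic treequence `x` in the graph subshift with `x(id) = v₁`. -/
theorem periodic_treequence_of_weight
    {ι V : Type} [Fintype ι] [Fintype V]
    (E : V → V → ι × Bool → Prop)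
    (Wv : V → ℝ) (We : V → V → (ι × Bool) → ℝ)
    (hWv : ∀ v, 0 ≤ Wv v) (hWe : ∀ v w l, 0 ≤ We v w l)
    (hsupp : ∀ v w l, ¬ E v w l → We v w l = 0)
    (h1 : ∀ v l, Wv v = ∑ w, We v w l)
    (h2 : ∀ v l, Wv v = ∑ w, We w v l)
    (h3 : ∀ v w l, We v w l = We w v (labInv l))
    (v₁ : V) (hpos : 0 < Wv v₁) :
    ∃ x : FreeGroup ι → V, InSubshift E x ∧
      (∃ H : Subgroup (FreeGroup ι), H.FiniteIndex ∧
        ∀ f ∈ H, ∀ h : FreeGroup ι, x (f⁻¹ * h) = x h) ∧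
      x 1 = v₁ :=
  periodic_treequence_of_weight_general E Wv We hWv hWe hsupp h1 h3 v₁ hpos
end

section
/- Let {r_i}_{i=1}^∞ be a sequence of vectors in ℝ^k with all coordinates nonnegative, and suppose the infinite sum r_∞ := Σ_{i=1}^∞ r_i converges (every coordinate is finite). Then there exist N > 0 and nonnegative real coefficients t_1,…,t_N such that r_∞ = Σ_{i=1}^N t_i r_i. -/
/-!
Let `V` be the span of all the `r i`; being finite-dimensional, it is already spanned by
`r 0, …, r (M - 1)` for some `M`, and it is closed, so it contains the sum `s`. The vector
`p = r 0 + ⋯ + r (M - 1)` is the image of the all-ones vector under the surjection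
`a ↦ ∑ aᵢ rᵢ` from `ℝ^M` onto `V`, which is an open map; hence every point of `V` close to `p`
is a combination of `r 0, …, r (M - 1)` with positive coefficients. Writing
`s = (s - ∑_{i<n} r i + p) + ∑_{M ≤ i < n} r i`, the first summand tends to `p` inside `V`,
so for large `n` both summands are nonnegative combinations of `r 0, …, r (n - 1)`.
-/

open Filter Topology Set Submodule
open scoped NNReal

lemma range_fin_subset_range_fin {M : Type*} (r : ℕ → M) {m n : ℕ} (h : m ≤ n) :
    range (fun i : Fin m => r i) ⊆ range (fun i : Fin n => r i) := by
  rintro _ ⟨i, rfl⟩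
  exact ⟨Fin.castLE h i, rfl⟩

lemma exists_span_range_fin_eq {R M : Type*} [Semiring R] [AddCommMonoid M] [Module R M]
    [IsNoetherian R M] (r : ℕ → M) :
    ∃ n, span R (range fun i : Fin n => r i) = span R (range r) := by
  let chain : ℕ →o Submodule R M :=
    ⟨fun n => span R (range fun i : Fin n => r i),
      fun _ _ h => span_mono (range_fin_subset_range_fin r h)⟩
  obtain ⟨n, hn⟩ := WellFoundedGT.monotone_chain_condition chain
  refine ⟨n, le_antisymm (span_mono (range_subset_iff.2 fun i => ⟨i, rfl⟩)) (span_le.2 ?_)⟩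
  rintro _ ⟨i, rfl⟩
  rw [SetLike.mem_coe, show span R _ = chain n from rfl, hn (max n (i + 1)) (le_max_left _ _)]
  exact subset_span ⟨⟨i, by omega⟩, rfl⟩

variable {E : Type*} [AddCommGroup E] [Module ℝ E] [TopologicalSpace E] [IsTopologicalAddGroup E]
  [ContinuousSMul ℝ E] [T2Space E]

lemma eventually_nhdsWithin_sum_mem_span_nnreal {ι : Type*} [Fintype ι] (v : ι → E) :
    ∀ᶠ y in 𝓝[span ℝ (range v)] (∑ i, v i), y ∈ span ℝ≥0 (range v) := by
  set V := span ℝ (range v)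
  have : FiniteDimensional ℝ V := .span_of_finite ℝ (finite_range v)
  let L : (ι → ℝ) →ₗ[ℝ] V := LinearMap.codRestrict V (Fintype.linearCombination ℝ v)
    fun a => (mem_span_range_iff_exists_fun _).2 ⟨a, rfl⟩
  have hL : Function.Surjective L := by
    rintro ⟨y, hy⟩
    obtain ⟨a, rfl⟩ := (mem_span_range_iff_exists_fun _).1 hy
    exact ⟨a, rfl⟩
  have hpos : IsOpen {a : ι → ℝ | ∀ i, 0 < a i} := by
    simpa only [ofPred_forall] using
      isOpen_iInter_of_finite fun i => isOpen_lt continuous_const (continuous_apply i)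
  have hsum : ∑ i, v i ∈ V := sum_mem fun i _ => subset_span ⟨i, rfl⟩
  rw [nhdsWithin_eq_map_subtype_coe hsum, eventually_map]
  filter_upwards [(L.isOpenMap_of_finiteDimensional hL _ hpos).mem_nhds
    ⟨1, fun _ => one_pos, Subtype.ext (by simp [L, Fintype.linearCombination_apply])⟩]
  rintro _ ⟨a, ha, rfl⟩
  exact (mem_span_range_iff_exists_fun _).2 ⟨fun i => ⟨a i, (ha i).le⟩, rfl⟩

theorem HasSum.eventually_mem_span_nnreal [FiniteDimensional ℝ E] {r : ℕ → E} {s : E}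
    (hs : HasSum r s) : ∀ᶠ n in atTop, s ∈ span ℝ≥0 (range fun i : Fin n => r i) := by
  obtain ⟨M, hM⟩ := exists_span_range_fin_eq (R := ℝ) r
  set p := ∑ i ∈ Finset.range M, r i
  have hpartial : ∀ n, ∑ i ∈ Finset.range n, r i ∈ span ℝ (range r) :=
    fun n => sum_mem fun i _ => subset_span ⟨i, rfl⟩
  have hsV : s ∈ span ℝ (range r) :=
    (closed_of_finiteDimensional _).mem_of_tendsto hs.tendsto_sum_nat (.of_forall hpartial)
  have hy : Tendsto (fun n => s - ∑ i ∈ Finset.range n, r i + p) atTop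
      (𝓝[span ℝ (range fun i : Fin M => r i)] p) := by
    refine tendsto_nhdsWithin_iff.2 ⟨?_, .of_forall fun n => ?_⟩
    · simpa using ((tendsto_const_nhds (x := s)).sub hs.tendsto_sum_nat).add_const p
    · rw [SetLike.mem_coe, hM]
      exact add_mem (sub_mem hsV (hpartial n)) (hpartial M)
  have hcone := eventually_nhdsWithin_sum_mem_span_nnreal fun i : Fin M => r i
  rw [Fin.sum_univ_eq_sum_range] at hcone
  filter_upwards [hy.eventually hcone, eventually_ge_atTop M] with n hn hMn
  have hsplit : s = (s - ∑ i ∈ Finset.range n, r i + p) + ∑ i ∈ Finset.Ico M n, r i := by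
    rw [← Finset.sum_range_add_sum_Ico _ hMn]; abel
  rw [hsplit]
  exact add_mem (span_mono (range_fin_subset_range_fin r hMn) hn)
    (sum_mem fun i hi => subset_span ⟨⟨i, (Finset.mem_Ico.1 hi).2⟩, rfl⟩)

theorem sum_in_finite_cone_general (k : ℕ) (r : ℕ → Fin k → ℝ)
    (hsum : ∀ j, Summable fun i => r i j) :
    ∃ N : ℕ, 0 < N ∧ ∃ t : Fin N → ℝ, (∀ i, 0 ≤ t i) ∧
      ∀ j, (∑' i, r i j) = ∑ i : Fin N, t i * r i j := by
  have hs : HasSum r fun j => ∑' i, r i j := Pi.hasSum.2 fun j => (hsum j).hasSum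
  obtain ⟨N, hmem, hN⟩ := (hs.eventually_mem_span_nnreal.and (eventually_gt_atTop 0)).exists
  obtain ⟨c, hc⟩ := (mem_span_range_iff_exists_fun _).1 hmem
  refine ⟨N, hN, fun i => c i, fun i => (c i).2, fun j => ?_⟩
  rw [← congrFun hc j]
  simp [NNReal.smul_def]

/-- if a sequence of nonnegative vectors in `ℝ^k` has a (coordinatewise)
convergent infinite sum `r_∞`, then `r_∞` is a nonnegative combination of finitely
many of the vectors. -/
theorem sum_in_finite_cone (k : ℕ) (r : ℕ → Fin k → ℝ)
    (hnn : ∀ i j, 0 ≤ r i j)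
    (hsum : ∀ j, Summable fun i => r i j) :
    ∃ N : ℕ, 0 < N ∧ ∃ t : Fin N → ℝ, (∀ i, 0 ≤ t i) ∧
      ∀ j, (∑' i, r i j) = ∑ i : Fin N, t i * r i j :=
  sum_in_finite_cone_general k r hsum
end

section
/- For every δ ≥ 0, λ ≥ 1, c ≥ 0 there exists K = K(δ,λ,c) ≥ 0 such that: in any proper δ-hyperbolic geodesic space (X,d), if q : I → X is an (M,λ,c)-local-quasi-geodesic on a closed interval I with M > 4Rλ + 8δλ + 2cλ + 1 (R = R(δ,λ,c) the stability constant for (λ,c)-quasi-geodesics), and [a,b] is a geodesic segment joining the endpoints of q, then the image q(I) is contained in the K-neighborhood of [a,b]. -/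
/-!
Let `t₀` almost maximise `D(t) = d(q t, s)` over the interval, `s` the geodesic segment. On the
window of length `M` around `t₀` the path `q` is a genuine quasi-geodesic, so `q t₀` is `R`-close
to a geodesic `[q u, q v]`. Close the quadrilateral with the nearest points `pu, pv ∈ s` of
`q u, q v`; it is `2δ`-thin. If `q t₀` is near `[pv, pu] ⊆ s` we are done. If it is near a point
`w` of `[q v, pv]`, then `D(t₀) ≤ R + 2δ + d(w, pv)` while `d(q v, w) + d(w, pv) = D(v) ≤ D(t₀) + ε`,
so `q t₀` is within `2(R + 2δ) + ε` of `q v`; as `|t₀ - v| = M/2` unless `v` is an endpoint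
(where `D(v) = 0`), the lower quasi-geodesic bound and the choice of `M` exclude this. Hence
every almost maximiser, and so every `t`, has `D(t) ≤ R + 2δ`.
-/

open Set

/-- `s` is (the image of) a geodesic segment from `x` to `y`. -/
def IsGeodesicSegment {X : Type} [MetricSpace X] (x y : X) (s : Set X) : Prop :=
  ∃ γ : ℝ → X, γ 0 = x ∧ γ (dist x y) = y ∧
    (∀ t ∈ Icc (0:ℝ) (dist x y), ∀ t' ∈ Icc (0:ℝ) (dist x y),
      dist (γ t) (γ t') = |t - t'|) ∧
    s = γ '' Icc 0 (dist x y)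

/-- A geodesic metric space: any two points are joined by a geodesic segment. -/
def GeodesicSpace (X : Type) [MetricSpace X] : Prop :=
  ∀ x y : X, ∃ s, IsGeodesicSegment x y s

/-- `δ`-hyperbolicity (thin triangles): a geodesic space in which each side of every
geodesic triangle lies in the `δ`-neighborhood of the union of the other two sides. -/
def DeltaHyperbolic (X : Type) [MetricSpace X] (δ : ℝ) : Prop :=
  GeodesicSpace X ∧
  ∀ (x y z : X) (s₁ s₂ s₃ : Set X),
    IsGeodesicSegment x y s₁ → IsGeodesicSegment y z s₂ → IsGeodesicSegment z x s₃ →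
    ∀ p ∈ s₁, ∃ q ∈ s₂ ∪ s₃, dist p q ≤ δ

/-- `q` is a `(λ,c)`-quasi-geodesic on the set `I ⊆ ℝ`. -/
def QuasiGeodesicOn {X : Type} [MetricSpace X] (q : ℝ → X) (I : Set ℝ) (lam c : ℝ) : Prop :=
  ∀ t ∈ I, ∀ t' ∈ I,
    lam⁻¹ * |t - t'| - c ≤ dist (q t) (q t') ∧ dist (q t) (q t') ≤ lam * |t - t'| + c

/-- `q` is an `(M,λ,c)`-local-quasi-geodesic on `I`: its restriction to every
subinterval of length at most `M` is a `(λ,c)`-quasi-geodesic. -/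
def LocalQuasiGeodesicOn {X : Type} [MetricSpace X] (q : ℝ → X) (I : Set ℝ)
    (M lam c : ℝ) : Prop :=
  ∀ a b : ℝ, a ∈ I → b ∈ I → a ≤ b → b - a ≤ M →
    QuasiGeodesicOn q (I ∩ Icc a b) lam c

open Metric


namespace IsGeodesicSegment

variable {X : Type} [MetricSpace X] {x y z p p' : X} {s : Set X}

lemma left_mem (h : IsGeodesicSegment x y s) : x ∈ s := by
  obtain ⟨γ, h0, -, -, rfl⟩ := h
  exact ⟨0, ⟨le_rfl, dist_nonneg⟩, h0⟩

lemma right_mem (h : IsGeodesicSegment x y s) : y ∈ s := by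
  obtain ⟨γ, -, hL, -, rfl⟩ := h
  exact ⟨dist x y, ⟨dist_nonneg, le_rfl⟩, hL⟩

lemma symm (h : IsGeodesicSegment x y s) : IsGeodesicSegment y x s := by
  obtain ⟨γ, h0, hL, hiso, rfl⟩ := h
  rw [IsGeodesicSegment, dist_comm y x]
  refine ⟨fun t => γ (dist x y - t), by simp [hL], by simp [h0], ?_, ?_⟩
  · intro t ht t' ht'
    rw [hiso _ ⟨by linarith [ht.2], by linarith [ht.1]⟩ _
      ⟨by linarith [ht'.2], by linarith [ht'.1]⟩, abs_sub_comm]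
    ring_nf
  · rw [show (fun t => γ (dist x y - t)) = γ ∘ (dist x y - ·) from rfl, image_comp,
      image_const_sub_Icc]
    simp

lemma dist_add_dist_eq (h : IsGeodesicSegment x y s) (hz : z ∈ s) :
    dist x z + dist z y = dist x y := by
  obtain ⟨γ, h0, hL, hiso, rfl⟩ := h
  obtain ⟨r, hr, rfl⟩ := hz
  have hx : dist x (γ r) = r := by
    rw [← h0, hiso 0 ⟨le_rfl, dist_nonneg⟩ r hr, zero_sub, abs_neg, abs_of_nonneg hr.1]
  have hy : dist (γ r) y = dist x y - r := by
    rw [← hL, hiso r hr _ ⟨dist_nonneg, le_rfl⟩, hL, abs_of_nonpos (by linarith [hr.2])]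
    ring
  rw [hx, hy]
  ring

lemma isCompact (h : IsGeodesicSegment x y s) : IsCompact s := by
  obtain ⟨γ, -, -, hiso, rfl⟩ := h
  have hlip : LipschitzOnWith 1 γ (Icc 0 (dist x y)) :=
    LipschitzOnWith.of_dist_le_mul fun t ht t' ht' => by simp [hiso t ht t' ht', Real.dist_eq]
  exact isCompact_Icc.image_of_continuousOn hlip.continuousOn

lemma exists_infDist_eq_dist (h : IsGeodesicSegment x y s) (w : X) :
    ∃ p ∈ s, dist w p = infDist w s := by
  obtain ⟨p, hp, hdist⟩ := h.isCompact.exists_infDist_eq_dist ⟨x, h.left_mem⟩ w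
  exact ⟨p, hp, hdist.symm⟩

lemma exists_subsegment (h : IsGeodesicSegment x y s) (hp : p ∈ s) (hp' : p' ∈ s) :
    ∃ s' ⊆ s, IsGeodesicSegment p p' s' := by
  obtain ⟨γ, -, -, hiso, rfl⟩ := h
  obtain ⟨r, hr, rfl⟩ := hp
  obtain ⟨r', hr', rfl⟩ := hp'
  have key : ∀ u ∈ Icc 0 (dist x y), ∀ u' ∈ Icc 0 (dist x y), u ≤ u' →
      ∃ s' ⊆ γ '' Icc 0 (dist x y), IsGeodesicSegment (γ u) (γ u') s' := by
    intro u hu u' hu' hle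
    have hd : dist (γ u) (γ u') = u' - u := by
      rw [hiso u hu u' hu', abs_of_nonpos (by linarith)]
      ring
    refine ⟨(fun t => γ (u + t)) '' Icc 0 (dist (γ u) (γ u')), ?_,
      fun t => γ (u + t), by simp, by rw [hd]; simp, ?_, rfl⟩
    · rw [show (fun t => γ (u + t)) = γ ∘ (u + ·) from rfl, image_comp, image_const_add_Icc,
        hd, add_zero, add_sub_cancel]
      exact image_mono (Icc_subset_Icc hu.1 hu'.2)
    · intro t ht t' ht'
      rw [hd] at ht ht'
      rw [hiso (u + t) ⟨by linarith [ht.1, hu.1], by linarith [ht.2, hu'.2]⟩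
        (u + t') ⟨by linarith [ht'.1, hu.1], by linarith [ht'.2, hu'.2]⟩]
      ring_nf
  rcases le_total r r' with hle | hle
  · exact key r hr r' hr' hle
  · obtain ⟨s', hsub, hseg⟩ := key r' hr' r hr hle
    exact ⟨s', hsub, hseg.symm⟩

end IsGeodesicSegment

def QuasiGeodesicsStable (X : Type) [MetricSpace X] (lam c R : ℝ) : Prop :=
  ∀ (q : ℝ → X) (a b : ℝ), a ≤ b → QuasiGeodesicOn q (Icc a b) lam c →
    ∀ s : Set X, IsGeodesicSegment (q a) (q b) s → ∀ t ∈ Icc a b, ∃ p ∈ s, dist (q t) p ≤ R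

section

variable {X : Type} [MetricSpace X] {δ lam c R M m ε a b t t₀ : ℝ} {q : ℝ → X} {s : Set X}

lemma QuasiGeodesicsStable.nonneg (h : QuasiGeodesicsStable X lam c R) (hX : GeodesicSpace X)
    (hc : 0 ≤ c) (x : X) : 0 ≤ R := by
  obtain ⟨s, hs⟩ := hX x x
  have hconst : QuasiGeodesicOn (fun _ => x) (Icc 0 0) lam c := by
    intro t ht t' ht'
    simp only [Icc_self, mem_singleton_iff] at ht ht'
    simp [ht, ht', hc]
  obtain ⟨p, -, hp⟩ := h _ 0 0 le_rfl hconst s hs 0 ⟨le_rfl, le_rfl⟩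
  exact dist_nonneg.trans hp

-- Split the quadrilateral along the diagonal from `x₃` to `x₁`.
lemma DeltaHyperbolic.exists_dist_le_of_mem_quadrilateral (hX : DeltaHyperbolic X δ)
    (hδ : 0 ≤ δ) {x₁ x₂ x₃ x₄ : X} {s₁ s₂ s₃ s₄ : Set X}
    (h₁ : IsGeodesicSegment x₁ x₂ s₁) (h₂ : IsGeodesicSegment x₂ x₃ s₂)
    (h₃ : IsGeodesicSegment x₃ x₄ s₃) (h₄ : IsGeodesicSegment x₄ x₁ s₄) :
    ∀ p ∈ s₁, ∃ y ∈ s₂ ∪ s₃ ∪ s₄, dist p y ≤ 2 * δ := by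
  intro p hp
  obtain ⟨d, hd⟩ := hX.1 x₃ x₁
  obtain ⟨r, hr | hr, hpr⟩ := hX.2 _ _ _ _ _ _ h₁ h₂ hd p hp
  · exact ⟨r, .inl (.inl hr), by linarith⟩
  obtain ⟨y, hy, hry⟩ := hX.2 _ _ _ _ _ _ hd h₄.symm h₃.symm r hr
  refine ⟨y, ?_, (dist_triangle p r y).trans (by linarith)⟩
  rcases hy with hy | hy
  exacts [.inr hy, .inl (.inr hy)]

lemma LocalQuasiGeodesicOn.quasiGeodesicOn_Icc (h : LocalQuasiGeodesicOn q (Icc a b) M lam c)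
    {u v : ℝ} (hau : a ≤ u) (huv : u ≤ v) (hvb : v ≤ b) (hM : v - u ≤ M) :
    QuasiGeodesicOn q (Icc u v) lam c := by
  have := h u v ⟨hau, huv.trans hvb⟩ ⟨hau.trans huv, hvb⟩ huv hM
  rwa [inter_eq_self_of_subset_right (Icc_subset_Icc hau hvb)] at this

lemma LocalQuasiGeodesicOn.dist_le {I : Set ℝ} (h : LocalQuasiGeodesicOn q I M lam c)
    {t' : ℝ} (ht : t ∈ I) (ht' : t' ∈ I) (hM : |t - t'| ≤ M) :
    dist (q t) (q t') ≤ lam * |t - t'| + c := by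
  rcases le_total t t' with hle | hle
  · exact (h t t' ht ht' hle (by rwa [abs_sub_comm, abs_of_nonneg (by linarith)] at hM)
      t ⟨ht, le_rfl, hle⟩ t' ⟨ht', hle, le_rfl⟩).2
  · exact (h t' t ht' ht hle (by rwa [abs_of_nonneg (by linarith)] at hM)
      t ⟨ht, hle, le_rfl⟩ t' ⟨ht', le_rfl, hle⟩).2

lemma LocalQuasiGeodesicOn.isBounded_image {I : Set ℝ} (h : LocalQuasiGeodesicOn q I M lam c)
    (hI : IsCompact I) (hM : 0 < M) (hlam : 0 ≤ lam) : Bornology.IsBounded (q '' I) := by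
  obtain ⟨T, hTI, hT, hcover⟩ := finite_cover_balls_of_compact hI hM
  refine ((Bornology.isBounded_biUnion hT).2 fun x _ => isBounded_closedBall (x := q x)
    (r := lam * M + c)).subset ?_
  rintro _ ⟨t, ht, rfl⟩
  obtain ⟨x, hx, htx⟩ := mem_iUnion₂.1 (hcover ht)
  rw [mem_ball, Real.dist_eq] at htx
  refine mem_iUnion₂.2 ⟨x, hx, (h.dist_le ht (hTI hx) htx.le).trans ?_⟩
  gcongr

lemma forall_le_of_forall_almost_max {ι : Type*} {f : ι → ℝ} {I : Set ι}
    (hf : BddAbove (f '' I)) {κ ε₀ : ℝ} (hε₀ : 0 < ε₀)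
    (h : ∀ ε, 0 < ε → ε ≤ ε₀ → ∀ i ∈ I, (∀ j ∈ I, f j ≤ f i + ε) → f i ≤ κ) :
    ∀ i ∈ I, f i ≤ κ := by
  intro i hi
  refine (le_csSup hf (mem_image_of_mem f hi)).trans (le_of_forall_pos_lt_add fun ε hε => ?_)
  have hε' : 0 < min ε ε₀ := lt_min hε hε₀
  obtain ⟨_, ⟨i₀, hi₀, rfl⟩, hlt⟩ :=
    exists_lt_of_lt_csSup ⟨f i, mem_image_of_mem f hi⟩ (sub_lt_self (sSup (f '' I)) hε')
  have := h _ hε' (min_le_right _ _) i₀ hi₀ fun j hj => by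
    linarith [le_csSup hf (mem_image_of_mem f hj)]
  linarith [min_le_left ε ε₀]

lemma exists_window (hm : 0 ≤ m) (ht₀ : t₀ ∈ Icc a b) :
    ∃ u v, a ≤ u ∧ u ≤ t₀ ∧ t₀ ≤ v ∧ v ≤ b ∧ v - u ≤ 2 * m ∧
      (u = a ∨ |t₀ - u| = m) ∧ (v = b ∨ |t₀ - v| = m) := by
  refine ⟨max a (t₀ - m), min b (t₀ + m), le_max_left _ _, max_le ht₀.1 (by linarith),
    le_min ht₀.2 (by linarith), min_le_left _ _,
    by linarith [le_max_right a (t₀ - m), min_le_right b (t₀ + m)], ?_, ?_⟩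
  · rcases max_cases a (t₀ - m) with ⟨h, -⟩ | ⟨h, -⟩
    · exact .inl h
    · exact .inr (by rw [h, sub_sub_cancel, abs_of_nonneg hm])
  · rcases min_cases b (t₀ + m) with ⟨h, -⟩ | ⟨h, -⟩
    · exact .inl h
    · exact .inr (by rw [h, sub_add_cancel_left, abs_neg, abs_of_nonneg hm])

lemma QuasiGeodesicOn.infDist_eq_zero_or_le_dist {I : Set ℝ} (hq : QuasiGeodesicOn q I lam c)
    (ht₀ : t₀ ∈ I) (ht : t ∈ I) (h : q t ∈ s ∨ |t₀ - t| = m) :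
    infDist (q t) s = 0 ∨ lam⁻¹ * m - c ≤ dist (q t₀) (q t) := by
  rcases h with h | h
  · exact .inl (infDist_zero_of_mem h)
  · exact .inr (h ▸ (hq t₀ ht₀ t ht).1)

/-- `pe` is a nearest point of `s` to `e`, and `hw` says that `w` lies between `e` and `pe`. -/
lemma infDist_le_of_dist_le_of_between {x e pe w : X} {κ : ℝ} (hpe : pe ∈ s)
    (hpe_eq : dist e pe = infDist e s) (hmax : infDist e s ≤ infDist x s + ε)
    (hw : dist e w + dist w pe = dist e pe) (hxw : dist x w ≤ κ)
    (he : infDist e s = 0 ∨ 2 * κ + ε < dist x e) : infDist x s ≤ κ := by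
  have hx : infDist x s ≤ κ + dist w pe :=
    (infDist_le_dist_of_mem hpe).trans ((dist_triangle x w pe).trans (by linarith))
  rcases he with he | he
  · linarith [dist_nonneg (x := e) (y := w)]
  · linarith [dist_triangle x w e, dist_comm w e]

theorem LocalQuasiGeodesicOn.infDist_le_of_almost_farthest (hX : DeltaHyperbolic X δ)
    (hδ : 0 ≤ δ) (hstab : QuasiGeodesicsStable X lam c R)
    (hq : LocalQuasiGeodesicOn q (Icc a b) (2 * m) lam c) (hm0 : 0 ≤ m)
    (hm : 2 * (R + 2 * δ) + ε < lam⁻¹ * m - c) (hs : IsGeodesicSegment (q a) (q b) s)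
    (ht₀ : t₀ ∈ Icc a b) (hmax : ∀ t ∈ Icc a b, infDist (q t) s ≤ infDist (q t₀) s + ε) :
    infDist (q t₀) s ≤ R + 2 * δ := by
  obtain ⟨u, v, hau, hut₀, ht₀v, hvb, hvu, hu, hv⟩ := exists_window hm0 ht₀
  have huv : u ≤ v := hut₀.trans ht₀v
  have hwin := hq.quasiGeodesicOn_Icc hau huv hvb hvu
  obtain ⟨g, hg⟩ := hX.1 (q u) (q v)
  obtain ⟨y, hy, hty⟩ := hstab q u v huv hwin g hg t₀ ⟨hut₀, ht₀v⟩
  obtain ⟨pu, hpu, hpu_eq⟩ := hs.exists_infDist_eq_dist (q u)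
  obtain ⟨pv, hpv, hpv_eq⟩ := hs.exists_infDist_eq_dist (q v)
  obtain ⟨g', hg's, hg'⟩ := hs.exists_subsegment hpv hpu
  obtain ⟨gu, hgu⟩ := hX.1 pu (q u)
  obtain ⟨gv, hgv⟩ := hX.1 (q v) pv
  obtain ⟨w, hw, hyw⟩ := hX.exists_dist_le_of_mem_quadrilateral hδ hg hgv hg' hgu y hy
  have hxw : dist (q t₀) w ≤ R + 2 * δ := (dist_triangle _ y w).trans (by linarith)
  rcases hw with (hw | hw) | hw
  · refine infDist_le_of_dist_le_of_between hpv hpv_eq (hmax v ⟨hau.trans huv, hvb⟩)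
      (hgv.dist_add_dist_eq hw) hxw ?_
    refine (hwin.infDist_eq_zero_or_le_dist ⟨hut₀, ht₀v⟩ ⟨huv, le_rfl⟩ ?_).imp_right
      hm.trans_le
    exact hv.imp_left fun h => by rw [h]; exact hs.right_mem
  · exact (infDist_le_dist_of_mem (hg's hw)).trans hxw
  · refine infDist_le_of_dist_le_of_between hpu hpu_eq (hmax u ⟨hau, huv.trans hvb⟩)
      (by rw [dist_comm, add_comm, dist_comm w, hgu.dist_add_dist_eq hw, dist_comm]) hxw ?_
    refine (hwin.infDist_eq_zero_or_le_dist ⟨hut₀, ht₀v⟩ ⟨le_rfl, huv⟩ ?_).imp_right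
      hm.trans_le
    exact hu.imp_left fun h => by rw [h]; exact hs.left_mem

end

/-- for all `δ ≥ 0`, `λ ≥ 1`, `c ≥ 0` and any stability constant `R` for
`(λ,c)`-quasi-geodesics, there is `K = K(δ,λ,c)` such that in any proper `δ`-hyperbolic
geodesic space, the image of any `(M,λ,c)`-local-quasi-geodesic on a closed interval
with `M > 4Rλ + 8δλ + 2cλ + 1` lies in the `K`-neighborhood of any geodesic segment
joining its endpoints. -/
theorem local_quasi_geodesic_close_to_geodesic
    (δ lam c : ℝ) (hδ : 0 ≤ δ) (hlam : 1 ≤ lam) (hc : 0 ≤ c) (R : ℝ)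
    (hstab : ∀ (X : Type) [MetricSpace X] [ProperSpace X], DeltaHyperbolic X δ →
      ∀ (q : ℝ → X) (a b : ℝ), a ≤ b → QuasiGeodesicOn q (Icc a b) lam c →
      ∀ s : Set X, IsGeodesicSegment (q a) (q b) s →
        (∀ t ∈ Icc a b, ∃ p ∈ s, dist (q t) p ≤ R) ∧
        (∀ p ∈ s, ∃ t ∈ Icc a b, dist p (q t) ≤ R)) :
    ∃ K : ℝ, 0 ≤ K ∧
      ∀ (X : Type) [MetricSpace X] [ProperSpace X], DeltaHyperbolic X δ →
      ∀ (q : ℝ → X) (a b M : ℝ), a ≤ b →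
        4*R*lam + 8*δ*lam + 2*c*lam + 1 < M →
        LocalQuasiGeodesicOn q (Icc a b) M lam c →
        ∀ s : Set X, IsGeodesicSegment (q a) (q b) s →
        ∀ t ∈ Icc a b, ∃ p ∈ s, dist (q t) p ≤ K := by
  refine ⟨max R 0 + 2 * δ, by positivity, ?_⟩
  intro X _ _ hX q a b M _ hM hq s hs t ht
  have hstab' : QuasiGeodesicsStable X lam c R := fun q a b hab hq s hs =>
    (hstab X hX q a b hab hq s hs).1
  have hR := hstab'.nonneg hX.1 hc (q a)
  have hlam0 : 0 < lam := zero_lt_one.trans_le hlam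
  have hM0 : 0 < M := by nlinarith
  have hq' : LocalQuasiGeodesicOn q (Icc a b) (2 * (M / 2)) lam c := by
    rwa [mul_div_cancel₀ M two_ne_zero]
  have hm : ∀ ε ≤ (2 * lam)⁻¹, 2 * (R + 2 * δ) + ε < lam⁻¹ * (M / 2) - c := by
    intro ε hε
    have : lam * (2 * (R + 2 * δ) + c + (2 * lam)⁻¹) < M / 2 := by
      field_simp
      nlinarith
    linarith [(lt_inv_mul_iff₀ hlam0).2 this]
  have hbdd : BddAbove ((fun t => infDist (q t) s) '' Icc a b) := by
    obtain ⟨r, hr⟩ := (hq.isBounded_image isCompact_Icc hM0 hlam0.le).subset_closedBall (q a)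
    refine ⟨r, forall_mem_image.2 fun t ht => ?_⟩
    exact (infDist_le_dist_of_mem hs.left_mem).trans (hr (mem_image_of_mem q ht))
  have hclose := forall_le_of_forall_almost_max hbdd (by positivity : 0 < (2 * lam)⁻¹)
    fun ε _ hε t₀ ht₀ hmax => hq'.infDist_le_of_almost_farthest hX hδ hstab' (half_pos hM0).le
      (hm ε hε) hs ht₀ hmax
  obtain ⟨p, hp, hpt⟩ := hs.exists_infDist_eq_dist (q t)
  exact ⟨p, hp, by linarith [hclose t ht, le_max_left R 0]⟩
end
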